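/- For integers a, b, c with a > b ≥ 0 and c ≥ 1 and b ≤ a - c, one has the identity ∑_{i=b}^{a-c} (-1)^i · C(a, i+c) · C(i, b) = (-1)^b · C(a-b-1, c-1). -/

import Mathlib

/-!
Write `i = b + q`. Upper negation turns `(-1)^q C(b+q, b)` into the generalized binomial
coefficient `C(-(b+1), q)`, and `C(a, b+c+q) = C(a, a-b-c-q)`, so the sum is `(-1)^b` times a
Chu–Vandermonde convolution, equal to `C(a-b-1, a-b-c) = C(a-b-1, c-1)`.
-/

open Finset

theorem Int.alternating_sum_range_choose_mul_choose (m b k : ℕ) :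
    ∑ q ∈ Finset.range (k + 1), (-1 : ℤ) ^ q * (b + q).choose b * m.choose (k - q) =
      Ring.choose ((m : ℤ) - (b + 1)) k := by
  rw [sub_eq_neg_add, Ring.add_choose_eq k (Commute.all _ _),
    Nat.sum_antidiagonal_eq_sum_range_succ
      (fun i j => Ring.choose (-((b : ℤ) + 1)) i * Ring.choose (m : ℤ) j)]
  refine sum_congr rfl fun q _ => ?_
  rw [Ring.choose_neg, Units.smul_def, Int.coe_negOnePow_natCast, smul_eq_mul,
    show (b : ℤ) + 1 + q - 1 = ((b + q : ℕ) : ℤ) by push_cast; ring,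
    Ring.choose_natCast, Ring.choose_natCast, Nat.choose_symm_add]

theorem combin2_general (a b c : ℕ) (hab : b < a) (hc : 1 ≤ c) :
    (∑ i ∈ Finset.Icc b (a - c),
        (-1 : ℤ) ^ i * (Nat.choose a (i + c)) * (Nat.choose i b)) =
      (-1 : ℤ) ^ b * (Nat.choose (a - b - 1) (c - 1)) := by
  rcases lt_or_ge a (b + c) with hlt | hle
  · rw [sum_eq_zero fun i hi => by
        rw [Nat.choose_eq_zero_of_lt (by grind : a < i + c)]; simp,
      Nat.choose_eq_zero_of_lt (by omega : a - b - 1 < c - 1)]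
    simp
  obtain ⟨k, rfl⟩ : ∃ k, a = b + c + k := ⟨a - (b + c), by omega⟩
  obtain ⟨c, rfl⟩ : ∃ c', c = c' + 1 := ⟨c - 1, by omega⟩
  rw [show b + (c + 1) + k - (c + 1) = b + k by omega, ← Ico_add_one_right_eq_Icc,
    sum_Ico_eq_sum_range, show b + k + 1 - b = k + 1 by omega]
  calc _ = (-1 : ℤ) ^ b * ∑ q ∈ range (k + 1),
          (-1 : ℤ) ^ q * (b + q).choose b * (b + (c + 1) + k).choose (k - q) := by
        rw [mul_sum]
        refine sum_congr rfl fun q hq => ?_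
        rw [Nat.choose_symm_of_eq_add (show b + (c + 1) + k = b + q + (c + 1) + (k - q) by
          grind), pow_add]
        ring
    _ = _ := by
        rw [Int.alternating_sum_range_choose_mul_choose,
          show ((b + (c + 1) + k : ℕ) : ℤ) - (b + 1) = ((c + k : ℕ) : ℤ) by push_cast; ring,
          Ring.choose_natCast, show b + (c + 1) + k - b - 1 = c + k by omega, Nat.add_sub_cancel,
          Nat.choose_symm_add]

/-- Lemma (combin2): for `a > b`, `c ≥ 1`, `b ≤ a - c`,
`∑_{i=b}^{a-c} (-1)^i C(a, i+c) C(i, b) = (-1)^b C(a-b-1, c-1)`. -/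
theorem combin2 (a b c : ℕ) (hab : b < a) (hc : 1 ≤ c) (hb : b ≤ a - c) :
    (∑ i ∈ Finset.Icc b (a - c),
        (-1 : ℤ) ^ i * (Nat.choose a (i + c)) * (Nat.choose i b)) =
      (-1 : ℤ) ^ b * (Nat.choose (a - b - 1) (c - 1)) :=
  combin2_general a b c hab hc
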